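/- Define g(h) = φ_{a,2}(h)² − ψ_a′(h)φ_{a,2}(h) + ψ_a′(h)², where φ_{a,2}(h) = (2/5)(3h − h² + 3h³) and ψ_a′(h) = (2/15)(6h − 3h² + 12h³). Then g(h) ≤ 4 for all h ∈ [0,1], with equality at h = 1. -/
import Mathlib

/-- φ_{a,2}(h) = (2/5)(3h − h² + 3h³). -/
noncomputable def φa2 (h : ℝ) : ℝ := (2/5) * (3*h - h^2 + 3*h^3)

/-- ψ_a′(h) = (2/15)(6h − 3h² + 12h³). -/
noncomputable def ψa' (h : ℝ) : ℝ := (2/15) * (6*h - 3*h^2 + 12*h^3)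

/-- g(h) = φ_{a,2}(h)² − ψ_a′(h)φ_{a,2}(h) + ψ_a′(h)². -/
noncomputable def g (h : ℝ) : ℝ := (φa2 h)^2 - ψa' h * φa2 h + (ψa' h)^2

theorem stmt6 : (∀ h ∈ Set.Icc (0:ℝ) 1, g h ≤ 4) ∧ g 1 = 4 := by
  constructor
  · rintro h ⟨h0, h1⟩
    unfold g φa2 ψa'
    nlinarith [sq_nonneg h, sq_nonneg (1-h), sq_nonneg (h*(1-h)), sq_nonneg (h^2*(1-h)), sq_nonneg (h^3*(1-h)), mul_nonneg h0 h0, sq_nonneg (1-h^2), sq_nonneg (1-h^3), mul_nonneg (mul_nonneg h0 h0) h0]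
  · unfold g φa2 ψa'; norm_num
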